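/- arXiv:2210.15997 — 6 statements merged into one kernel-verified Lean document; each statement's English description precedes it below -/
import Mathlib

section
/- Let 𝓕 be a set of functions from ℝ^d to Z that is closed under input translation (for every f ∈ 𝓕 and b ∈ ℝ^d, x ↦ f(x + b) ∈ 𝓕), and assume the loss ℓ is nonnegative. Let ι be a measurable space, P a probability measure on ι, and F : ι → (ℝ^d → Z) a family with F(θ) ∈ 𝓕 for every θ, such that for every δ ∈ ℝ^d the map θ ↦ L(F(θ), δ) is P-integrable; set g(δ) = ∫ L(F(θ), δ) dP(θ). Let ε ≥ 0. If (δ*, P) is a Nash equilibrium of the universal adversarial perturbation game, i.e. ‖δ*‖ ≤ ε, g(δ) ≤ g(δ*) for every δ with ‖δ‖ ≤ ε, and g(δ*) ≤ L(f, δ*) for every f ∈ 𝓕, then g(δ̃) = g(δ*) for every δ̃ with ‖δ̃‖ ≤ ε. In particular g(0) = g(δ*), so the zero perturbation achieves the same equilibrium value as δ*, and no nonzero pure adversary strategy is strictly better. (Theorem 1, part 2.) -/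
open MeasureTheory

/-- **Theorem 1, part 2.** If the classifier class `𝓕` is closed under input translation and
the loss is nonnegative, then at any Nash equilibrium `(δ*, P)` of the universal adversarial
perturbation game (with mixed classifier strategy given by a probability measure `P` over a
family `F` of classifiers in `𝓕`), every feasible perturbation `δ̃` (in particular `δ̃ = 0`)
achieves the same expected loss value as `δ*`: no nonzero pure adversary strategy is strictly
better. -/
theorem uap_game_no_nontrivial_pure_nash
    {d : ℕ} {Z Y : Type*}
    (𝓕 : Set (EuclideanSpace ℝ (Fin d) → Z))
    (hclosed : ∀ f ∈ 𝓕, ∀ b : EuclideanSpace ℝ (Fin d), (fun x => f (x + b)) ∈ 𝓕)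
    (ℓ : Z → Y → ℝ) (hℓ : ∀ z yy, 0 ≤ ℓ z yy)
    (n : ℕ)
    (x : Fin n → EuclideanSpace ℝ (Fin d)) (y : Fin n → Y)
    (L : (EuclideanSpace ℝ (Fin d) → Z) → EuclideanSpace ℝ (Fin d) → ℝ)
    (hL : ∀ f δ, L f δ = (1 / (n : ℝ)) * ∑ i, ℓ (f (x i + δ)) (y i))
    {ι : Type*} [MeasurableSpace ι] (P : Measure ι) [IsProbabilityMeasure P]
    (F : ι → (EuclideanSpace ℝ (Fin d) → Z)) (hF : ∀ θ, F θ ∈ 𝓕)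
    (hint : ∀ δ : EuclideanSpace ℝ (Fin d), Integrable (fun θ => L (F θ) δ) P)
    (g : EuclideanSpace ℝ (Fin d) → ℝ)
    (hg : ∀ δ, g δ = ∫ θ, L (F θ) δ ∂P)
    (ε : ℝ) (hε : 0 ≤ ε)
    (δstar : EuclideanSpace ℝ (Fin d)) (hδstar : ‖δstar‖ ≤ ε)
    (hadv : ∀ δ : EuclideanSpace ℝ (Fin d), ‖δ‖ ≤ ε → g δ ≤ g δstar)
    (hcls : ∀ f ∈ 𝓕, g δstar ≤ L f δstar) :
    (∀ δtilde : EuclideanSpace ℝ (Fin d), ‖δtilde‖ ≤ ε → g δtilde = g δstar) ∧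
    g 0 = g δstar := by
  have key : ∀ δtilde : EuclideanSpace ℝ (Fin d), ‖δtilde‖ ≤ ε → g δtilde = g δstar := by
    intro δt hδt
    refine le_antisymm (hadv δt hδt) ?_
    have hpt : ∀ θ, g δstar ≤ L (F θ) δt := by
      intro θ
      have hmem := hclosed (F θ) (hF θ) (δt - δstar)
      have h1 := hcls _ hmem
      have heq : L (fun x_1 => F θ (x_1 + (δt - δstar))) δstar = L (F θ) δt := by
        rw [hL, hL]
        congr 1
        refine Finset.sum_congr rfl fun i _ => ?_
        congr 2
        abel
      linarith
    calc g δstar = ∫ _θ, g δstar ∂P := by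
            simp [integral_const]
      _ ≤ ∫ θ, L (F θ) δt ∂P := integral_mono (integrable_const _) (hint δt) hpt
      _ = g δt := (hg δt).symm
  exact ⟨key, key 0 (by simpa using hε)⟩
end

section
/- Let h : E → ℝ be differentiable with ρ-Lipschitz gradient (ρ ≥ 0), let δ ∈ E satisfy ‖δ‖² ≤ B for some B ≥ 0, and let λ > Bρ. Then for every x ∈ E, the supremum over τ ∈ ℝ of h(x + τδ) − (λ/2)τ² is finite and satisfies the lower bound (1/(2(λ + Bρ))) ⟪δ, ∇h(x)⟫² ≤ (sup_{τ ∈ ℝ} [ h(x + τδ) − (λ/2)τ² ]) − h(x). (Proposition 1, lower bound.) -/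
/-!
Along the line `τ ↦ x + τ • δ`, the `ρ`-Lipschitz gradient pins `h` between the two quadratics
`h x + τ ⟪δ, ∇h x⟫ ± (Bρ/2) τ²` (descent lemma). Subtracting `(λ/2) τ²`, the upper one has a finite
maximum since `λ > Bρ`, and the lower one attains `⟪δ, ∇h x⟫² / (2(λ + Bρ))` at
`τ = ⟪δ, ∇h x⟫ / (λ + Bρ)`.
-/

open scoped RealInnerProductSpace

theorem mul_sub_half_mul_sq_le {c : ℝ} (hc : 0 < c) (g τ : ℝ) :
    τ * g - c / 2 * τ ^ 2 ≤ g ^ 2 / (2 * c) := by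
  rw [le_div_iff₀ (by positivity)]
  nlinarith [sq_nonneg (g - c * τ)]

theorem div_mul_sub_half_mul_div_sq {c : ℝ} (hc : c ≠ 0) (g : ℝ) :
    g / c * g - c / 2 * (g / c) ^ 2 = g ^ 2 / (2 * c) := by
  field_simp
  ring

section DescentLemma

variable {E : Type*} [NormedAddCommGroup E] [InnerProductSpace ℝ E] [CompleteSpace E]
  {h : E → ℝ} {ρ : ℝ}

theorem hasDerivAt_comp_add_smul {x d : E} {t : ℝ} (hdiff : DifferentiableAt ℝ h (x + t • d)) :
    HasDerivAt (fun t : ℝ => h (x + t • d)) ⟪gradient h (x + t • d), d⟫ t := by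
  have hline : HasDerivAt (fun t : ℝ => x + t • d) d t := by
    simpa using ((hasDerivAt_id t).smul_const d).const_add x
  exact hdiff.hasGradientAt.hasFDerivAt.comp_hasDerivAt t hline

theorem abs_sub_sub_inner_gradient_le (hdiff : ∀ x, DifferentiableAt ℝ h x)
    (hlip : ∀ x x', ‖gradient h x - gradient h x'‖ ≤ ρ * ‖x - x'‖) (x d : E) :
    |h (x + d) - h x - ⟪gradient h x, d⟫| ≤ ρ / 2 * ‖d‖ ^ 2 := by
  set f : ℝ → ℝ := fun t => h (x + t • d) - h x - t * ⟪gradient h x, d⟫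
  have hf : ∀ t, HasDerivAt f ⟪gradient h (x + t • d) - gradient h x, d⟫ t := fun t => by
    rw [inner_sub_left]
    exact ((hasDerivAt_comp_add_smul (hdiff _)).sub_const (h x)).sub
      (hasDerivAt_mul_const ⟪gradient h x, d⟫)
  have hboundary : ∀ t : ℝ, HasDerivAt (fun t => ρ / 2 * ‖d‖ ^ 2 * t ^ 2) (ρ * ‖d‖ ^ 2 * t) t :=
    fun t => ((hasDerivAt_pow 2 t).const_mul (ρ / 2 * ‖d‖ ^ 2)).congr_deriv (by ring)
  have hderiv_le : ∀ t ∈ Set.Ico (0 : ℝ) 1,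
      ‖⟪gradient h (x + t • d) - gradient h x, d⟫‖ ≤ ρ * ‖d‖ ^ 2 * t := fun t ht =>
    calc ‖⟪gradient h (x + t • d) - gradient h x, d⟫‖
        ≤ ‖gradient h (x + t • d) - gradient h x‖ * ‖d‖ := norm_inner_le_norm _ _
      _ ≤ ρ * ‖t • d‖ * ‖d‖ := by gcongr; simpa using hlip (x + t • d) x
      _ = ρ * ‖d‖ ^ 2 * t := by rw [norm_smul, Real.norm_of_nonneg ht.1]; ring
  have := image_norm_le_of_norm_deriv_right_le_deriv_boundary
    (fun t _ => (hf t).continuousAt.continuousWithinAt) (fun t _ => (hf t).hasDerivWithinAt)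
    (by simp [f]) hboundary hderiv_le (Set.right_mem_Icc.2 zero_le_one)
  simpa [f] using this

theorem abs_comp_add_smul_sub_le (hρ : 0 ≤ ρ) (hdiff : ∀ x, DifferentiableAt ℝ h x)
    (hlip : ∀ x x', ‖gradient h x - gradient h x'‖ ≤ ρ * ‖x - x'‖) {δ : E} {B : ℝ}
    (hδ : ‖δ‖ ^ 2 ≤ B) (x : E) (τ : ℝ) :
    |h (x + τ • δ) - h x - τ * ⟪δ, gradient h x⟫| ≤ B * ρ / 2 * τ ^ 2 := by
  have hdescent := abs_sub_sub_inner_gradient_le hdiff hlip x (τ • δ)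
  rw [real_inner_smul_right, real_inner_comm, norm_smul, mul_pow, Real.norm_eq_abs, sq_abs]
    at hdescent
  refine hdescent.trans ?_
  have : ρ * ‖δ‖ ^ 2 ≤ ρ * B := by gcongr
  nlinarith [sq_nonneg τ]

end DescentLemma

theorem uad_pca_lower_bound_general
    {E : Type*} [NormedAddCommGroup E] [InnerProductSpace ℝ E] [CompleteSpace E]
    (h : E → ℝ) (ρ : ℝ) (hρ : 0 ≤ ρ)
    (hdiff : ∀ x, DifferentiableAt ℝ h x)
    (hlip : ∀ x x' : E, ‖gradient h x - gradient h x'‖ ≤ ρ * ‖x - x'‖)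
    (δ : E) (B : ℝ) (hδ : ‖δ‖ ^ 2 ≤ B)
    (lam : ℝ) (hlam : B * ρ < lam)
    (x : E) :
    BddAbove (Set.range fun τ : ℝ => h (x + τ • δ) - lam / 2 * τ ^ 2) ∧
    (1 / (2 * (lam + B * ρ))) * ⟪δ, gradient h x⟫ ^ 2 ≤
      sSup (Set.range fun τ : ℝ => h (x + τ • δ) - lam / 2 * τ ^ 2) - h x := by
  set g := ⟪δ, gradient h x⟫
  have hline := abs_comp_add_smul_sub_le hρ hdiff hlip hδ x
  have hbdd : BddAbove (Set.range fun τ : ℝ => h (x + τ • δ) - lam / 2 * τ ^ 2) := by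
    refine ⟨h x + g ^ 2 / (2 * (lam - B * ρ)), ?_⟩
    rintro _ ⟨τ, rfl⟩
    have hupper := (abs_le.1 (hline τ)).2
    have hquad := mul_sub_half_mul_sq_le (sub_pos.2 hlam) g τ
    linarith
  refine ⟨hbdd, ?_⟩
  have hBρ : 0 ≤ B * ρ := mul_nonneg ((sq_nonneg _).trans hδ) hρ
  set τ₀ := g / (lam + B * ρ)
  have hsup : h (x + τ₀ • δ) - lam / 2 * τ₀ ^ 2 ≤ _ := le_csSup hbdd ⟨τ₀, rfl⟩
  have hlower := (abs_le.1 (hline τ₀)).1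
  have hquad : τ₀ * g - (lam + B * ρ) / 2 * τ₀ ^ 2 = g ^ 2 / (2 * (lam + B * ρ)) :=
    div_mul_sub_half_mul_div_sq (by linarith) g
  rw [one_div_mul_eq_div]
  linarith

/-- **Proposition 1, lower bound.** For a `ρ`-smooth `h`, a direction `δ` with `‖δ‖² ≤ B`, and
`λ > Bρ`, the supremum over `τ ∈ ℝ` of `h(x + τδ) − (λ/2)τ²` is finite and satisfies
`(1/(2(λ + Bρ))) ⟪δ, ∇h(x)⟫² ≤ sup_τ [h(x + τδ) − (λ/2)τ²] − h(x)`. -/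
theorem uad_pca_lower_bound
    {E : Type*} [NormedAddCommGroup E] [InnerProductSpace ℝ E] [CompleteSpace E]
    (h : E → ℝ) (ρ : ℝ) (hρ : 0 ≤ ρ)
    (hdiff : ∀ x, DifferentiableAt ℝ h x)
    (hlip : ∀ x x' : E, ‖gradient h x - gradient h x'‖ ≤ ρ * ‖x - x'‖)
    (δ : E) (B : ℝ) (hB : 0 ≤ B) (hδ : ‖δ‖ ^ 2 ≤ B)
    (lam : ℝ) (hlam : B * ρ < lam)
    (x : E) :
    BddAbove (Set.range fun τ : ℝ => h (x + τ • δ) - lam / 2 * τ ^ 2) ∧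
    (1 / (2 * (lam + B * ρ))) * ⟪δ, gradient h x⟫ ^ 2 ≤
      sSup (Set.range fun τ : ℝ => h (x + τ • δ) - lam / 2 * τ ^ 2) - h x :=
  uad_pca_lower_bound_general h ρ hρ hdiff hlip δ B hδ lam hlam x
end

section
/- Let M be a real symmetric positive semidefinite d×d matrix whose largest eigenvalue λ₁ = λ_max(M) is simple, i.e. the eigenspace { v ∈ ℝ^d : M v = λ₁ v } is one-dimensional. If Δ is a real PSD matrix with trace(Δ) = 1 and trace(M·Δ) = λ₁, then Δ = v vᵀ for a unit eigenvector v of M associated with λ₁; in particular every maximizer Δ of trace(M·Δ) over the trace-one PSD spectraplex is rank-one. (Rank-one maximizer lemma used in the proof of Theorem 2, part 1.) -/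
/-!
Since `λ₁` is the top eigenvalue, `N = λ₁ • 1 - M` is PSD, and `trace (N * Δ) = 0` because
`trace Δ = 1`. Writing `N = Pᴴ P` and `Δ = Qᴴ Q`, this trace is the squared Frobenius norm of
`P Qᴴ`, so `N * Δ = 0`, i.e. `M * Δ = λ₁ • Δ`: every column of `Δ` lies in the top eigenspace
`ℝ ∙ u` with `‖u‖ = 1`, and a symmetric matrix whose columns all lie in `ℝ ∙ u` is
`trace Δ • u uᵀ`.
-/

open Matrix

namespace Matrix

open scoped ComplexOrder MatrixOrder

variable {n 𝕜 : Type*} [Fintype n] [RCLike 𝕜]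

lemma PosSemidef.mul_eq_zero_of_trace_mul_eq_zero [DecidableEq n] {A B : Matrix n n 𝕜}
    (hA : A.PosSemidef) (hB : B.PosSemidef) (h : (A * B).trace = 0) : A * B = 0 := by
  obtain ⟨P, rfl⟩ := CStarAlgebra.nonneg_iff_eq_star_mul_self.mp hA.nonneg
  obtain ⟨Q, rfl⟩ := CStarAlgebra.nonneg_iff_eq_star_mul_self.mp hB.nonneg
  simp only [star_eq_conjTranspose] at h ⊢
  have hPQ : P * Qᴴ = 0 := by
    rw [← trace_conjTranspose_mul_self_eq_zero_iff, ← h, conjTranspose_mul,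
      conjTranspose_conjTranspose]
    simp only [Matrix.mul_assoc]
    rw [trace_mul_comm Q]
    simp only [Matrix.mul_assoc]
  rw [Matrix.mul_assoc, ← Matrix.mul_assoc P, hPQ, zero_mul, mul_zero]

lemma IsHermitian.posSemidef_smul_one_sub [DecidableEq n] {A : Matrix n n 𝕜}
    (hA : A.IsHermitian) {r : ℝ} (hr : ∀ i, hA.eigenvalues i ≤ r) : (r • 1 - A).PosSemidef := by
  rw [← le_iff, ← Algebra.algebraMap_eq_smul_one, le_algebraMap_iff_spectrum_le hA.isSelfAdjoint,
    hA.spectrum_real_eq_range_eigenvalues]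
  rintro _ ⟨i, rfl⟩
  exact hr i

lemma IsHermitian.mul_eq_smul_of_trace_mul_eq [DecidableEq n] {A B : Matrix n n 𝕜}
    (hA : A.IsHermitian) (hB : B.PosSemidef) {r : ℝ} (hr : ∀ i, hA.eigenvalues i ≤ r)
    (h : (A * B).trace = r • B.trace) : A * B = r • B := by
  have hzero := (hA.posSemidef_smul_one_sub hr).mul_eq_zero_of_trace_mul_eq_zero hB (by
    rw [Matrix.sub_mul, trace_sub, h, smul_mul, one_mul, trace_smul, sub_self])
  rwa [Matrix.sub_mul, smul_mul, one_mul, sub_eq_zero, eq_comm] at hzero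

lemma rank_eq_zero_iff {m K : Type*} [Finite m] [Field K] {A : Matrix m n K} :
    A.rank = 0 ↔ A = 0 := by
  rw [rank_eq_finrank_span_cols, Submodule.finrank_eq_zero, Submodule.span_eq_bot]
  constructor
  · intro h
    ext i j
    exact congrFun (h _ ⟨j, rfl⟩) i
  · rintro rfl _ ⟨j, rfl⟩
    rfl

lemma col_mem_eigenspace_of_mul_eq_smul {R : Type*} [CommRing R] [DecidableEq n]
    {A B : Matrix n n R} {r : R} (h : A * B = r • B) (j : n) :
    B.col j ∈ Module.End.eigenspace (toLin' A) r := by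
  rw [Module.End.mem_eigenspace_iff, toLin'_apply]
  exact congrArg (·.col j) h

lemma IsSymm.eq_trace_smul_vecMulVec {R : Type*} [CommRing R] {A : Matrix n n R}
    (hA : A.IsSymm) {u : n → R} (hu : u ⬝ᵥ u = 1) (hcol : ∀ j, ∃ c : R, c • u = A.col j) :
    A = A.trace • vecMulVec u u := by
  choose c hc using hcol
  have hentry : ∀ i j, A i j = c j * u i := fun i j => (congrFun (hc j) i).symm
  have hc_eq : ∀ j, c j = (c ⬝ᵥ u) * u j := fun j => by
    calc c j = c j * (u ⬝ᵥ u) := by rw [hu, mul_one]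
    _ = ∑ i, A i j * u i := by simp only [dotProduct, Finset.mul_sum, hentry, mul_assoc]
    _ = ∑ i, A j i * u i := by simp only [hA.apply]
    _ = (c ⬝ᵥ u) * u j := by
      simp only [hentry, dotProduct, Finset.sum_mul]
      exact Finset.sum_congr rfl fun i _ => by ring
  have hA' : A = (c ⬝ᵥ u) • vecMulVec u u := by
    ext i j
    rw [hentry, hc_eq, smul_apply, vecMulVec_apply, smul_eq_mul]
    ring
  rw [hA', trace_smul, trace_vecMulVec, hu, smul_eq_mul, mul_one, ← hA']

end Matrix

lemma Submodule.exists_dotProduct_self_eq_one_of_finrank_eq_one {n : Type*} [Fintype n]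
    {W : Submodule ℝ (n → ℝ)} (hW : Module.finrank ℝ W = 1) :
    ∃ u, u ⬝ᵥ u = 1 ∧ W = ℝ ∙ u := by
  obtain ⟨⟨v, hvW⟩, hv0, hspan⟩ := finrank_eq_one_iff'.mp hW
  have hpos : 0 < v ⬝ᵥ v := by
    simpa using dotProduct_star_self_pos_iff.mpr fun h => hv0 (Subtype.ext h)
  have hscale : 0 < (√(v ⬝ᵥ v))⁻¹ := inv_pos.mpr (Real.sqrt_pos.mpr hpos)
  refine ⟨(√(v ⬝ᵥ v))⁻¹ • v, ?_, ?_⟩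
  · rw [smul_dotProduct, dotProduct_smul, smul_eq_mul, smul_eq_mul, ← mul_assoc, ← mul_inv,
      Real.mul_self_sqrt hpos.le, inv_mul_cancel₀ hpos.ne']
  · rw [Submodule.span_singleton_smul_eq hscale.ne'.isUnit]
    refine le_antisymm (fun w hw => ?_) ((Submodule.span_singleton_le_iff_mem _ _).mpr hvW)
    obtain ⟨c, hc⟩ := hspan ⟨w, hw⟩
    exact Submodule.mem_span_singleton.mpr ⟨c, congrArg Subtype.val hc⟩

/-- **Rank-one maximizer lemma (proof of Theorem 2, part 1).** If the largest eigenvalue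
`λ₁` of a real symmetric PSD matrix `M` is simple, then every maximizer `Δ` of
`trace(M·Δ)` over the trace-one PSD spectraplex is the rank-one outer product `v vᵀ` of a
unit top eigenvector `v` of `M`. -/
theorem spectraplex_maximizer_rank_one_of_simple_top_eigenvalue
    {d : ℕ} (M : Matrix (Fin d) (Fin d) ℝ) (hpsd : M.PosSemidef)
    (lam1 : ℝ) (hlam1 : lam1 = ⨆ i, hpsd.1.eigenvalues i)
    (hsimple :
      Module.finrank ℝ (Module.End.eigenspace (Matrix.toLin' M) lam1) = 1)
    (Δ : Matrix (Fin d) (Fin d) ℝ) (hΔ : Δ.PosSemidef) (htr : Δ.trace = 1)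
    (hmax : (M * Δ).trace = lam1) :
    ∃ v : EuclideanSpace ℝ (Fin d), ‖v‖ = 1 ∧
      M.mulVec v = lam1 • (v : Fin d → ℝ) ∧
      Δ = Matrix.vecMulVec v v ∧ Δ.rank = 1 := by
  have hle : ∀ i, hpsd.1.eigenvalues i ≤ lam1 := fun i =>
    hlam1 ▸ le_ciSup (Set.finite_range _).bddAbove i
  have hMΔ : M * Δ = lam1 • Δ :=
    hpsd.1.mul_eq_smul_of_trace_mul_eq hΔ hle (by rw [hmax, htr, smul_eq_mul, mul_one])
  obtain ⟨u, hu, hspan⟩ := Submodule.exists_dotProduct_self_eq_one_of_finrank_eq_one hsimple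
  have hΔu : Δ = vecMulVec u u := by
    have hcol j : ∃ c : ℝ, c • u = Δ.col j :=
      Submodule.mem_span_singleton.mp (hspan ▸ col_mem_eigenspace_of_mul_eq_smul hMΔ j)
    simpa [htr] using (isHermitian_iff_isSymm.mp hΔ.1).eq_trace_smul_vecMulVec hu hcol
  have hMu : M *ᵥ u = lam1 • u := by
    have hu_mem := hspan ▸ Submodule.mem_span_singleton_self u
    rwa [Module.End.mem_eigenspace_iff, toLin'_apply] at hu_mem
  have hnorm : ‖WithLp.toLp 2 u‖ = 1 := by
    rw [← pow_eq_one_iff_of_nonneg (norm_nonneg _) two_ne_zero, ← real_inner_self_eq_norm_sq,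
      EuclideanSpace.inner_toLp_toLp, star_trivial, hu]
  have hΔ0 : Δ ≠ 0 := by
    rintro rfl
    simp at htr
  refine ⟨WithLp.toLp 2 u, hnorm, hMu, hΔu, le_antisymm (hΔu ▸ rank_vecMulVec_le u u) ?_⟩
  exact Nat.one_le_iff_ne_zero.mpr (rank_eq_zero_iff.not.mpr hΔ0)
end

section
/- Let 𝓜 be a nonempty, convex, compact set of real symmetric positive semidefinite d×d matrices, and define V(M) = sup_{δ ∈ ℝ^d, ‖δ‖ ≤ 1} δᵀ M δ (which equals λ_max(M)). Assume that every minimizer M* of V over 𝓜 has a simple largest eigenvalue, i.e. the eigenspace { v : M* v = V(M*) v } is one-dimensional. Then the rank-one-constrained max–min and min–max values coincide: sup_{‖δ‖ ≤ 1} inf_{M ∈ 𝓜} δᵀ M δ = inf_{M ∈ 𝓜} sup_{‖δ‖ ≤ 1} δᵀ M δ. (Value-equality form of Theorem 2, part 1.) -/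
/-!
`V` is lower semicontinuous, being a supremum of linear functions of `M`, so it attains its
minimum `λ` on `𝓜` at some `M⋆`; weak duality bounds the max–min value by `λ`. When `λ > 0`, a
maximiser `v` of `δ ↦ δᵀ M⋆ δ` on the unit ball is a unit eigenvector for `λ`, and simplicity
of `λ` yields a spectral gap `μ < λ` on `v⊥`. If some `M ∈ 𝓜` had `vᵀ M v = λ - ε < λ`, then
splitting `x = a v + w` with `w ⊥ v` gives `xᵀ (M⋆ + t (M - M⋆)) x ≤ λ - t ε / 2` on the ball for
small `t > 0`, the gap absorbing the cross terms; this contradicts minimality of `M⋆`, since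
`M⋆ + t (M - M⋆) ∈ 𝓜`. Hence `v` (or `δ = 0` when `λ ≤ 0`) secures `λ` against every `M ∈ 𝓜`.
-/

open Matrix
open Set Filter Topology Module
open scoped RealInnerProductSpace

lemma isCompact_norm_le_one {F : Type*} [NormedAddCommGroup F] [ProperSpace F] :
    IsCompact {x : F | ‖x‖ ≤ 1} := by
  simpa only [Metric.closedBall, dist_zero_right] using isCompact_closedBall (0 : F) 1

section InnerProductSpace

variable {E : Type*} [NormedAddCommGroup E] [InnerProductSpace ℝ E]

noncomputable def quadSup (T : E →L[ℝ] E) : ℝ :=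
  sSup ((fun x => ⟪x, T x⟫) '' {x : E | ‖x‖ ≤ 1})

lemma abs_inner_apply_le (S : E →L[ℝ] E) (x y : E) : |⟪x, S y⟫| ≤ ‖S‖ * ‖x‖ * ‖y‖ :=
  calc |⟪x, S y⟫| ≤ ‖x‖ * ‖S y‖ := abs_real_inner_le_norm _ _
    _ ≤ ‖x‖ * (‖S‖ * ‖y‖) := by gcongr; exact S.le_opNorm y
    _ = ‖S‖ * ‖x‖ * ‖y‖ := by ring

lemma inner_smul_apply_smul (T : E →L[ℝ] E) (c : ℝ) (x : E) :
    ⟪c • x, T (c • x)⟫ = c ^ 2 * ⟪x, T x⟫ := by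
  rw [map_smul, real_inner_smul_left, real_inner_smul_right]; ring

lemma bddAbove_inner_apply_self (T : E →L[ℝ] E) :
    BddAbove ((fun x => ⟪x, T x⟫) '' {x : E | ‖x‖ ≤ 1}) := by
  refine ⟨‖T‖, ?_⟩
  rintro _ ⟨x, hx : ‖x‖ ≤ 1, rfl⟩
  calc ⟪x, T x⟫ ≤ ‖T‖ * ‖x‖ * ‖x‖ := (le_abs_self _).trans (abs_inner_apply_le T x x)
    _ ≤ ‖T‖ * 1 * 1 := by gcongr
    _ = ‖T‖ := by ring

lemma inner_apply_le_quadSup (T : E →L[ℝ] E) {x : E} (hx : ‖x‖ ≤ 1) : ⟪x, T x⟫ ≤ quadSup T :=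
  le_csSup (bddAbove_inner_apply_self T) ⟨x, hx, rfl⟩

lemma quadSup_le {T : E →L[ℝ] E} {c : ℝ} (h : ∀ x : E, ‖x‖ ≤ 1 → ⟪x, T x⟫ ≤ c) :
    quadSup T ≤ c :=
  csSup_le ⟨_, 0, by simp, rfl⟩ (by rintro _ ⟨x, hx, rfl⟩; exact h x hx)

lemma lowerSemicontinuous_quadSup : LowerSemicontinuous (quadSup (E := E)) := by
  have hsup : quadSup (E := E) = fun T => ⨆ x : {x : E // ‖x‖ ≤ 1}, ⟪(x : E), T x⟫ := by
    funext T
    rw [quadSup, image_eq_range]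
    rfl
  rw [hsup]
  refine lowerSemicontinuous_ciSup (fun T => ?_) fun x => Continuous.lowerSemicontinuous ?_
  · have hbdd := bddAbove_inner_apply_self T
    rw [image_eq_range] at hbdd
    exact hbdd
  · fun_prop

lemma norm_eq_one_and_apply_eq_smul_of_isMaxOn [CompleteSpace E] {T : E →L[ℝ] E}
    (hT : IsSelfAdjoint T) {x : E} (hx : ‖x‖ ≤ 1)
    (hmax : ∀ y : E, ‖y‖ ≤ 1 → ⟪y, T y⟫ ≤ ⟪x, T x⟫) (hpos : 0 < ⟪x, T x⟫) :
    ‖x‖ = 1 ∧ T x = ⟪x, T x⟫ • x := by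
  have hx0 : x ≠ 0 := by rintro rfl; simp at hpos
  have hx0' : 0 < ‖x‖ := norm_pos_iff.2 hx0
  have hnorm : ‖x‖ = 1 := by
    have h := hmax (‖x‖⁻¹ • x) (by rw [norm_smul, norm_inv, norm_norm, inv_mul_cancel₀ hx0'.ne'])
    rw [inner_smul_apply_smul] at h
    have h' : (‖x‖⁻¹) ^ 2 ≤ 1 := le_of_mul_le_mul_right (by rwa [one_mul]) hpos
    rw [pow_le_one_iff_of_nonneg (by positivity) two_ne_zero, inv_le_one₀ hx0'] at h'
    exact le_antisymm hx h'
  have hquad : T.reApplyInnerSelf = fun y => ⟪y, T y⟫ := by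
    funext y
    rw [ContinuousLinearMap.reApplyInnerSelf_apply, RCLike.re_to_real, real_inner_comm]
  have hsphere : IsMaxOn T.reApplyInnerSelf (Metric.sphere 0 ‖x‖) x := by
    intro y hy
    rw [hquad, mem_ofPred_eq]
    exact hmax y (by rw [mem_sphere_zero_iff_norm.1 hy, hnorm])
  refine ⟨hnorm, (hT.eq_smul_self_of_isLocalExtrOn (Or.inr hsphere.localize)).trans ?_⟩
  rw [ContinuousLinearMap.rayleighQuotient, hquad, hnorm]
  simp

lemma eq_zero_of_mem_of_inner_eq_zero {p : Submodule ℝ E} (hp : finrank ℝ p = 1) {v w : E}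
    (hv : v ∈ p) (hw : w ∈ p) (hv0 : v ≠ 0) (hvw : ⟪v, w⟫ = 0) : w = 0 := by
  obtain ⟨c, hc⟩ :=
    (finrank_eq_one_iff_of_nonzero' (⟨v, hv⟩ : p) (by simpa using hv0)).1 hp ⟨w, hw⟩
  have hcw : w = c • v := by simpa using hc.symm
  rw [hcw, real_inner_smul_right, mul_eq_zero, inner_self_eq_zero (𝕜 := ℝ),
    or_iff_left hv0] at hvw
  rw [hcw, hvw, zero_smul]

lemma exists_spectralGap_of_finrank_eigenspace_eq_one [FiniteDimensional ℝ E]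
    {T : E →L[ℝ] E} (hT : IsSelfAdjoint T) {v : E} {lam : ℝ} (hv : ‖v‖ = 1)
    (hTv : T v = lam • v) (hlam : 0 < lam) (hmax : ∀ x : E, ‖x‖ ≤ 1 → ⟪x, T x⟫ ≤ lam)
    (hsimple : finrank ℝ (Module.End.eigenspace (T : E →ₗ[ℝ] E) lam) = 1) :
    ∃ mu < lam, ∀ w : E, ⟪v, w⟫ = 0 → ⟪w, T w⟫ ≤ mu * ‖w‖ ^ 2 := by
  have hK : IsCompact ({x : E | ‖x‖ ≤ 1} ∩ {x | ⟪v, x⟫ = 0}) :=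
    isCompact_norm_le_one.inter_right (isClosed_eq (by fun_prop) continuous_const)
  obtain ⟨w₀, ⟨hw₀, hvw₀⟩, hmax₀⟩ := hK.exists_isMaxOn ⟨0, by simp, by simp⟩
    (by fun_prop : Continuous fun x : E => ⟪x, T x⟫).continuousOn
  refine ⟨⟪w₀, T w₀⟫, (hmax w₀ hw₀).lt_of_ne fun heq => ?_, fun w hvw => ?_⟩
  · obtain ⟨hnorm, hTw₀⟩ := norm_eq_one_and_apply_eq_smul_of_isMaxOn hT hw₀
      (fun y hy => heq ▸ hmax y hy) (heq ▸ hlam)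
    have hw₀0 := eq_zero_of_mem_of_inner_eq_zero hsimple (Module.End.mem_eigenspace_iff.2 hTv)
      (Module.End.mem_eigenspace_iff.2 (heq ▸ hTw₀)) (norm_ne_zero_iff.1 (by simp [hv])) hvw₀
    simp [hw₀0] at hnorm
  · rcases eq_or_ne w 0 with rfl | hw0
    · simp
    have hw0' : 0 < ‖w‖ := norm_pos_iff.2 hw0
    have h := @hmax₀ (‖w‖⁻¹ • w)
      ⟨by rw [mem_ofPred_eq, norm_smul, norm_inv, norm_norm, inv_mul_cancel₀ hw0'.ne'],
        by rw [mem_ofPred_eq, real_inner_smul_right, hvw, mul_zero]⟩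
    simp only [mem_ofPred_eq, inner_smul_apply_smul] at h
    calc ⟪w, T w⟫ = ‖w‖ ^ 2 * ((‖w‖⁻¹) ^ 2 * ⟪w, T w⟫) := by field_simp
      _ ≤ ‖w‖ ^ 2 * ⟪w₀, T w₀⟫ := by gcongr
      _ = ⟪w₀, T w₀⟫ * ‖w‖ ^ 2 := mul_comm _ _

lemma inner_smul_add_apply_smul_add (S : E →L[ℝ] E) (a : ℝ) (v w : E) :
    ⟪a • v + w, S (a • v + w)⟫
      = a ^ 2 * ⟪v, S v⟫ + a * ⟪v, S w⟫ + a * ⟪w, S v⟫ + ⟪w, S w⟫ := by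
  simp only [map_add, map_smul, inner_add_left, inner_add_right, real_inner_smul_left,
    real_inner_smul_right]
  ring

lemma inner_smul_add_apply_smul_add_of_eigen [CompleteSpace E] {T : E →L[ℝ] E}
    (hT : IsSelfAdjoint T) {v w : E} {lam : ℝ} (hv : ‖v‖ = 1) (hTv : T v = lam • v)
    (hvw : ⟪v, w⟫ = 0) (a : ℝ) :
    ⟪a • v + w, T (a • v + w)⟫ = lam * a ^ 2 + ⟪w, T w⟫ := by
  rw [inner_smul_add_apply_smul_add, ← hT.isSymmetric.apply_clm v w, hTv]
  simp only [real_inner_smul_left, real_inner_smul_right, real_inner_self_eq_norm_sq, hv,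
    real_inner_comm v w, hvw]
  ring

lemma inner_smul_add_apply_smul_add_le (S : E →L[ℝ] E) {v w : E} (hv : ‖v‖ = 1) (a : ℝ) :
    ⟪a • v + w, S (a • v + w)⟫
      ≤ a ^ 2 * ⟪v, S v⟫ + 2 * ‖S‖ * |a| * ‖w‖ + ‖S‖ * ‖w‖ ^ 2 := by
  have hvw := abs_inner_apply_le S v w
  have hwv := abs_inner_apply_le S w v
  have hww := abs_inner_apply_le S w w
  rw [hv] at hvw hwv
  rw [inner_smul_add_apply_smul_add]
  have h1 : a * ⟪v, S w⟫ ≤ |a| * (‖S‖ * 1 * ‖w‖) :=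
    (le_abs_self _).trans (by rw [abs_mul]; gcongr)
  have h2 : a * ⟪w, S v⟫ ≤ |a| * (‖S‖ * ‖w‖ * 1) :=
    (le_abs_self _).trans (by rw [abs_mul]; gcongr)
  nlinarith [le_abs_self ⟪w, S w⟫]

-- The bound on `⟪x, (T + t • S) x⟫` in the coordinates `a = ⟪v, x⟫`, `s = ‖x - a • v‖`.
lemma quadratic_le_sub_of_small {lam mu eps C t a s : ℝ} (heps : 0 < eps) (ht : 0 ≤ t)
    (has : a ^ 2 + s ^ 2 ≤ 1) (hsmall : t * (C + 2 * C ^ 2 / eps + eps / 2) ≤ lam - mu)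
    (hpos : t * eps / 2 ≤ lam) :
    lam * a ^ 2 + mu * s ^ 2 + t * (-eps * a ^ 2 + 2 * C * |a| * s + C * s ^ 2)
      ≤ lam - t * eps / 2 := by
  have hamgm : 2 * C * |a| * s ≤ eps / 2 * a ^ 2 + 2 * C ^ 2 / eps * s ^ 2 := by
    have h : 0 ≤ (eps * |a| - 2 * C * s) ^ 2 / (2 * eps) := by positivity
    have h' : (eps * |a| - 2 * C * s) ^ 2 / (2 * eps)
        = eps / 2 * a ^ 2 + 2 * C ^ 2 / eps * s ^ 2 - 2 * C * |a| * s := by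
      field_simp
      rw [← sq_abs a]
      ring
    linarith
  have h1 := mul_le_mul_of_nonneg_left hamgm ht
  have h2 : (mu + t * (C + 2 * C ^ 2 / eps)) * s ^ 2 ≤ (lam - t * eps / 2) * s ^ 2 :=
    mul_le_mul_of_nonneg_right (by linarith) (sq_nonneg s)
  have h3 : (lam - t * eps / 2) * (a ^ 2 + s ^ 2) ≤ lam - t * eps / 2 :=
    mul_le_of_le_one_right (by linarith) has
  linarith

lemma inner_add_smul_apply_le [CompleteSpace E] {T S : E →L[ℝ] E} (hT : IsSelfAdjoint T)
    {v : E} {lam mu eps t : ℝ} (hv : ‖v‖ = 1) (hTv : T v = lam • v)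
    (hgap : ∀ w : E, ⟪v, w⟫ = 0 → ⟪w, T w⟫ ≤ mu * ‖w‖ ^ 2) (heps : 0 < eps)
    (hSv : ⟪v, S v⟫ = -eps) (ht : 0 ≤ t)
    (hsmall : t * (‖S‖ + 2 * ‖S‖ ^ 2 / eps + eps / 2) ≤ lam - mu) (hpos : t * eps / 2 ≤ lam)
    {x : E} (hx : ‖x‖ ≤ 1) :
    ⟪x, (T + t • S) x⟫ ≤ lam - t * eps / 2 := by
  set a := ⟪v, x⟫
  set w := x - a • v
  have hxw : x = a • v + w := by simp [w]
  have hvw : ⟪v, w⟫ = 0 := by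
    simp [w, a, inner_sub_right, real_inner_smul_right, hv]
  have has : a ^ 2 + ‖w‖ ^ 2 ≤ 1 := by
    have h := norm_add_sq_eq_norm_sq_add_norm_sq_real (x := a • v) (y := w)
      (by rw [real_inner_smul_left, hvw, mul_zero])
    rw [← hxw, norm_smul, hv, mul_one, Real.norm_eq_abs, abs_mul_abs_self] at h
    nlinarith [norm_nonneg x]
  have hTx : ⟪x, T x⟫ ≤ lam * a ^ 2 + mu * ‖w‖ ^ 2 := by
    rw [hxw, inner_smul_add_apply_smul_add_of_eigen hT hv hTv hvw]
    linarith [hgap w hvw]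
  have hSx := inner_smul_add_apply_smul_add_le S hv a (w := w)
  rw [← hxw, hSv] at hSx
  rw [_root_.add_apply, _root_.smul_apply, inner_add_right, real_inner_smul_right]
  calc ⟪x, T x⟫ + t * ⟪x, S x⟫
      ≤ lam * a ^ 2 + mu * ‖w‖ ^ 2
        + t * (-eps * a ^ 2 + 2 * ‖S‖ * |a| * ‖w‖ + ‖S‖ * ‖w‖ ^ 2) := by
        gcongr
        linarith
    _ ≤ lam - t * eps / 2 := quadratic_le_sub_of_small heps ht has hsmall hpos

lemma eventually_quadSup_add_smul_le [CompleteSpace E] {T S : E →L[ℝ] E}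
    (hT : IsSelfAdjoint T) {v : E} {lam mu eps : ℝ} (hv : ‖v‖ = 1) (hTv : T v = lam • v)
    (hlam : 0 < lam) (hmu : mu < lam) (hgap : ∀ w : E, ⟪v, w⟫ = 0 → ⟪w, T w⟫ ≤ mu * ‖w‖ ^ 2)
    (heps : 0 < eps) (hSv : ⟪v, S v⟫ = -eps) :
    ∀ᶠ t in 𝓝[>] 0, quadSup (T + t • S) ≤ lam - t * eps / 2 := by
  have hlim (c : ℝ) : Tendsto (fun t : ℝ => t * c) (𝓝[>] 0) (𝓝 0) := by
    simpa using ((continuous_mul_const c).tendsto 0).mono_left nhdsWithin_le_nhds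
  filter_upwards [(hlim _).eventually_lt_const (sub_pos.2 hmu),
    (hlim (eps / 2)).eventually_lt_const hlam, self_mem_nhdsWithin] with t hsmall hpos ht
  exact quadSup_le fun x hx => inner_add_smul_apply_le hT hv hTv hgap heps hSv
    (le_of_lt ht) hsmall.le (by linarith) hx

lemma exists_norm_eq_one_apply_eq_quadSup_smul [FiniteDimensional ℝ E] {T : E →L[ℝ] E}
    (hT : IsSelfAdjoint T) (hpos : 0 < quadSup T) : ∃ v : E, ‖v‖ = 1 ∧ T v = quadSup T • v := by
  obtain ⟨x, hx, hmax⟩ := isCompact_norm_le_one.exists_isMaxOn ⟨0, by simp⟩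
    (by fun_prop : Continuous fun x : E => ⟪x, T x⟫).continuousOn
  have hval : ⟪x, T x⟫ = quadSup T :=
    le_antisymm (inner_apply_le_quadSup T hx) (quadSup_le fun y hy => hmax hy)
  rw [← hval] at hpos ⊢
  exact ⟨x, norm_eq_one_and_apply_eq_smul_of_isMaxOn hT hx (fun y hy => hmax hy) hpos⟩

lemma quadSup_le_inner_apply_of_isMinOn [CompleteSpace E] {𝓣 : Set (E →L[ℝ] E)}
    (hconv : Convex ℝ 𝓣) {T₀ : E →L[ℝ] E} (hT₀ : T₀ ∈ 𝓣) (hmin : IsMinOn quadSup 𝓣 T₀)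
    (hsa : IsSelfAdjoint T₀) {v : E} {mu : ℝ} (hv : ‖v‖ = 1) (hTv : T₀ v = quadSup T₀ • v)
    (hpos : 0 < quadSup T₀) (hmu : mu < quadSup T₀)
    (hgap : ∀ w : E, ⟪v, w⟫ = 0 → ⟪w, T₀ w⟫ ≤ mu * ‖w‖ ^ 2) {T : E →L[ℝ] E} (hT : T ∈ 𝓣) :
    quadSup T₀ ≤ ⟪v, T v⟫ := by
  by_contra! hlt
  have hSv : ⟪v, (T - T₀) v⟫ = -(quadSup T₀ - ⟪v, T v⟫) := by
    rw [_root_.sub_apply, inner_sub_right, hTv, real_inner_smul_right,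
      real_inner_self_eq_norm_sq, hv]
    ring
  obtain ⟨t, hle, ht⟩ := ((eventually_quadSup_add_smul_le hsa hv hTv hpos hmu hgap
    (sub_pos.2 hlt) hSv).and (Ioo_mem_nhdsGT one_pos)).exists
  have hmem := hconv.add_smul_sub_mem hT₀ hT ⟨ht.1.le, ht.2.le⟩
  have := mul_pos ht.1 (sub_pos.2 hlt)
  linarith [isMinOn_iff.1 hmin _ hmem]

lemma exists_norm_le_one_forall_quadSup_le_inner_apply [FiniteDimensional ℝ E]
    {𝓣 : Set (E →L[ℝ] E)} (hconv : Convex ℝ 𝓣) {T₀ : E →L[ℝ] E} (hT₀ : T₀ ∈ 𝓣)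
    (hmin : IsMinOn quadSup 𝓣 T₀) (hsa : IsSelfAdjoint T₀)
    (hsimple : finrank ℝ (Module.End.eigenspace (T₀ : E →ₗ[ℝ] E) (quadSup T₀)) = 1) :
    ∃ x : E, ‖x‖ ≤ 1 ∧ ∀ T ∈ 𝓣, quadSup T₀ ≤ ⟪x, T x⟫ := by
  rcases le_or_gt (quadSup T₀) 0 with hle | hpos
  · exact ⟨0, by simp, fun T _ => by simpa using hle⟩
  obtain ⟨v, hv, hTv⟩ := exists_norm_eq_one_apply_eq_quadSup_smul hsa hpos
  obtain ⟨mu, hmu, hgap⟩ := exists_spectralGap_of_finrank_eigenspace_eq_one hsa hv hTv hpos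
    (fun x hx => inner_apply_le_quadSup T₀ hx) hsimple
  exact ⟨v, hv.le, fun T hT =>
    quadSup_le_inner_apply_of_isMinOn hconv hT₀ hmin hsa hv hTv hpos hmu hgap hT⟩

theorem sSup_sInf_inner_apply_eq_sInf_quadSup [FiniteDimensional ℝ E]
    {𝓣 : Set (E →L[ℝ] E)} (hne : 𝓣.Nonempty) (hconv : Convex ℝ 𝓣) (hcpt : IsCompact 𝓣)
    (hsa : ∀ T ∈ 𝓣, IsSelfAdjoint T)
    (hsimple : ∀ T₀ ∈ 𝓣, IsMinOn quadSup 𝓣 T₀ →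
      finrank ℝ (Module.End.eigenspace (T₀ : E →ₗ[ℝ] E) (quadSup T₀)) = 1) :
    sSup ((fun x => sInf ((fun T => ⟪x, T x⟫) '' 𝓣)) '' {x : E | ‖x‖ ≤ 1})
      = sInf (quadSup '' 𝓣) := by
  obtain ⟨T₀, hT₀, hmin⟩ :=
    (lowerSemicontinuous_quadSup.lowerSemicontinuousOn 𝓣).exists_isMinOn hne hcpt
  obtain ⟨x₀, hx₀, hrobust⟩ := exists_norm_le_one_forall_quadSup_le_inner_apply hconv hT₀ hmin
    (hsa T₀ hT₀) (hsimple T₀ hT₀ hmin)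
  have hle (x : E) (hx : ‖x‖ ≤ 1) : sInf ((fun T => ⟪x, T x⟫) '' 𝓣) ≤ quadSup T₀ :=
    (csInf_le (hcpt.image (f := fun T : E →L[ℝ] E => ⟪x, T x⟫) (by fun_prop)).bddBelow
      ⟨T₀, hT₀, rfl⟩).trans (inner_apply_le_quadSup T₀ hx)
  have hleast : IsLeast (quadSup '' 𝓣) (quadSup T₀) :=
    ⟨⟨T₀, hT₀, rfl⟩, by rintro _ ⟨T, hT, rfl⟩; exact hmin hT⟩
  rw [hleast.csInf_eq]
  apply IsGreatest.csSup_eq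
  refine ⟨⟨x₀, hx₀, le_antisymm (hle x₀ hx₀) ?_⟩, ?_⟩
  · exact le_csInf (hne.image _) (by rintro _ ⟨T, hT, rfl⟩; exact hrobust T hT)
  · rintro _ ⟨x, hx, rfl⟩
    exact hle x hx

end InnerProductSpace

section Matrix

variable {n : Type*} [Fintype n] [DecidableEq n]

lemma finrank_eigenspace_toEuclideanCLM (M : Matrix n n ℝ) (μ : ℝ) :
    finrank ℝ (Module.End.eigenspace
        ((toEuclideanCLM (𝕜 := ℝ) M : EuclideanSpace ℝ n →L[ℝ] EuclideanSpace ℝ n) :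
          EuclideanSpace ℝ n →ₗ[ℝ] EuclideanSpace ℝ n) μ)
      = finrank ℝ (Module.End.eigenspace (toLin' M) μ) := by
  have h : (Module.End.eigenspace (toEuclideanLin M) μ).map
        (WithLp.linearEquiv 2 ℝ (n → ℝ) : EuclideanSpace ℝ n →ₗ[ℝ] n → ℝ)
      = Module.End.eigenspace (toLin' M) μ := by
    ext y
    rw [Submodule.map_equiv_eq_comap_symm]
    simp only [Submodule.mem_comap, Module.End.mem_eigenspace_iff]
    rw [← (WithLp.linearEquiv 2 ℝ (n → ℝ)).symm.injective.eq_iff, map_smul]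
    rfl
  rw [← h, LinearEquiv.finrank_map_eq]
  rfl

end Matrix

/-- **Theorem 2, part 1 (value-equality form).** For a nonempty convex compact set `𝓜` of
real symmetric PSD matrices, with `V(M) = sup_{‖δ‖ ≤ 1} δᵀMδ`, if every minimizer of `V`
over `𝓜` has a simple largest eigenvalue then
`sup_{‖δ‖ ≤ 1} inf_{M ∈ 𝓜} δᵀMδ = inf_{M ∈ 𝓜} sup_{‖δ‖ ≤ 1} δᵀMδ`. -/
theorem uad_game_value_equality_of_simple_top_eigenvalue
    {d : ℕ} (𝓜 : Set (Matrix (Fin d) (Fin d) ℝ))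
    (hne : 𝓜.Nonempty) (hconv : Convex ℝ 𝓜) (hcpt : IsCompact 𝓜)
    (hpsd : ∀ M ∈ 𝓜, M.PosSemidef)
    (V : Matrix (Fin d) (Fin d) ℝ → ℝ)
    (hV : ∀ M, V M =
      sSup ((fun δ : EuclideanSpace ℝ (Fin d) => δ ⬝ᵥ M.mulVec δ) ''
        {δ : EuclideanSpace ℝ (Fin d) | ‖δ‖ ≤ 1}))
    (hsimple : ∀ Mstar ∈ 𝓜, (∀ M ∈ 𝓜, V Mstar ≤ V M) →
      Module.finrank ℝ (Module.End.eigenspace (Matrix.toLin' Mstar) (V Mstar)) = 1) :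
    sSup ((fun δ : EuclideanSpace ℝ (Fin d) =>
        sInf ((fun M => δ ⬝ᵥ M.mulVec δ) '' 𝓜)) ''
        {δ : EuclideanSpace ℝ (Fin d) | ‖δ‖ ≤ 1}) =
      sInf ((fun M => sSup ((fun δ : EuclideanSpace ℝ (Fin d) => δ ⬝ᵥ M.mulVec δ) ''
        {δ : EuclideanSpace ℝ (Fin d) | ‖δ‖ ≤ 1})) '' 𝓜) := by
  set φ := (toEuclideanCLM (n := Fin d) (𝕜 := ℝ)).toAlgEquiv.toLinearMap
  have hφ (M : Matrix (Fin d) (Fin d) ℝ) : φ M = toEuclideanCLM (𝕜 := ℝ) M := rfl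
  have hquad (M : Matrix (Fin d) (Fin d) ℝ) (δ : EuclideanSpace ℝ (Fin d)) :
      δ ⬝ᵥ M.mulVec δ = ⟪δ, φ M δ⟫ :=
    (inner_toEuclideanCLM M δ δ).symm
  have hVφ (M : Matrix (Fin d) (Fin d) ℝ) : V M = quadSup (φ M) := by
    simp only [hV, hquad, quadSup]
  have key := sSup_sInf_inner_apply_eq_sInf_quadSup (𝓣 := φ '' 𝓜) (hne.image _)
    (hconv.linear_image φ) (hcpt.image φ.continuous_of_finiteDimensional) ?_ ?_
  · simp only [Set.image_image, ← hVφ, ← hquad] at key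
    simpa only [← hV] using key
  · rintro _ ⟨M, hM, rfl⟩
    rw [hφ]
    exact (hpsd M hM).1.isSelfAdjoint.map toEuclideanCLM
  · rintro _ ⟨M, hM, rfl⟩ hmin
    rw [← hVφ, hφ, finrank_eigenspace_toEuclideanCLM]
    exact hsimple M hM fun N hN => by
      rw [hVφ, hVφ]
      exact isMinOn_iff.1 hmin _ (mem_image_of_mem φ hN)
end

section
/- Let 𝓜 be a nonempty, convex, compact set of real symmetric positive semidefinite d×d matrices, and define V(M) = sup_{‖δ‖ ≤ 1} δᵀ M δ. Assume that every minimizer M* of V over 𝓜 has a simple largest eigenvalue (one-dimensional top eigenspace). Then the approximate universal adversarial direction game has a Nash equilibrium with a pure adversary strategy: there exist M* ∈ 𝓜 and δ* ∈ ℝ^d with ‖δ*‖ ≤ 1 such that (a) δᵀ M* δ ≤ δ*ᵀ M* δ* for every δ with ‖δ‖ ≤ 1, and (b) δ*ᵀ M* δ* ≤ δ*ᵀ M δ* for every M ∈ 𝓜. (Theorem 2, part 1, saddle-point form.) -/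
/-!
Let `M*` minimise `V` over `𝓜` (`V` is continuous and `𝓜` compact) and let `δ*` maximise
`δᵀ M* δ` on the unit ball, so that (a) holds and `λ := V M* = δ*ᵀ M* δ*`.
For (b) fix `M ∈ 𝓜`. Minimality of `M*` on the segment `Mₜ = (1 - t) M* + t M` gives,
for every `t ∈ (0, 1]`, a point `δₜ` of the ball with `λ ≤ (1 - t) δₜᵀ M* δₜ + t δₜᵀ M δₜ`;
by compactness some `δ₀` is a maximiser for `M*` with `δ₀ᵀ M δ₀ ≥ λ`.
Every maximiser `v` for `M*` is a `λ`-eigenvector, since `λ I - M*` is positive semidefinite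
and `vᵀ (λ I - M*) v ≤ 0`. When `λ > 0`, simplicity of the top eigenvalue forces `δ₀ = ±δ*`,
hence `δ*ᵀ M δ* = δ₀ᵀ M δ₀ ≥ λ`; when `λ = 0`, (b) is positivity of `M`.
-/

open Matrix Filter Topology

theorem IsCompact.exists_eq_and_le_of_forall_exists_le_convexComb {X : Type*}
    [TopologicalSpace X] {K : Set X} (hK : IsCompact K) {f g : X → ℝ}
    (hf : Continuous f) (hg : Continuous g) {c : ℝ} (hfc : ∀ x ∈ K, f x ≤ c)
    (hcomb : ∀ t ∈ Set.Ioc (0 : ℝ) 1, ∃ x ∈ K, c ≤ (1 - t) * f x + t * g x) :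
    ∃ x ∈ K, f x = c ∧ c ≤ g x := by
  set τ : ℕ → ℝ := fun k => 1 / ((k : ℝ) + 1)
  have hτ_pos (k : ℕ) : 0 < τ k := Nat.one_div_pos_of_nat
  have hτ_anti : Antitone τ := fun i j hij => by
    simp only [τ]; gcongr
  have hτ_mem (k : ℕ) : τ k ∈ Set.Ioc (0 : ℝ) 1 :=
    ⟨hτ_pos k, by simpa [τ] using hτ_anti (Nat.zero_le k)⟩
  choose u huK hu using fun k => hcomb (τ k) (hτ_mem k)
  set S : ℕ → Set X := fun k => {x | c ≤ (1 - τ k) * f x + τ k * g x}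
  -- Below the level `c`, the constraint `c ≤ (1 - t) f + t g` only gets weaker as `t` grows.
  have hS_anti {i j : ℕ} (hij : i ≤ j) : ∀ x ∈ K, x ∈ S j → x ∈ S i := fun x hx hxj => by
    have hfx := hfc x hx
    have hτij := hτ_anti hij
    have hτj := hτ_pos j
    simp only [S, Set.mem_ofPred_eq] at hxj ⊢
    nlinarith
  obtain ⟨x, hxK, hxS⟩ : (K ∩ ⋂ k, S k).Nonempty := by
    refine hK.inter_iInter_nonempty S
      (fun k => isClosed_le continuous_const
        ((continuous_const.mul hf).add (continuous_const.mul hg)))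
      fun s => ⟨u (s.sup id), huK _, Set.mem_iInter₂.2 fun k hk => ?_⟩
    exact hS_anti (Finset.le_sup (f := id) hk) _ (huK _) (hu _)
  have hxS := Set.mem_iInter.1 hxS
  have hτ_lim : Tendsto τ atTop (𝓝 0) := tendsto_one_div_add_atTop_nhds_zero_nat
  have hlim : Tendsto (fun k => (1 - τ k) * f x + τ k * g x) atTop (𝓝 (f x)) := by
    simpa using (((tendsto_const_nhds (x := (1 : ℝ))).sub hτ_lim).mul_const (f x)).add
      (hτ_lim.mul_const (g x))
  refine ⟨x, hxK, le_antisymm (hfc x hxK) (ge_of_tendsto' hlim hxS), ?_⟩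
  simpa [S, τ] using hxS 0

section QuadFormSup

variable {n : Type*} [Fintype n]

noncomputable def quadFormSup (M : Matrix n n ℝ) : ℝ :=
  sSup ((fun δ : EuclideanSpace ℝ n => δ ⬝ᵥ M *ᵥ δ) '' {δ | ‖δ‖ ≤ 1})

theorem isCompact_unitBall : IsCompact {δ : EuclideanSpace ℝ n | ‖δ‖ ≤ 1} := by
  simpa [Metric.closedBall, dist_zero_right] using isCompact_closedBall (0 : EuclideanSpace ℝ n) 1

theorem continuous_quadForm (M : Matrix n n ℝ) :
    Continuous fun δ : EuclideanSpace ℝ n => δ ⬝ᵥ M *ᵥ δ := by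
  fun_prop

theorem continuous_quadFormSup : Continuous (quadFormSup (n := n)) :=
  isCompact_unitBall.continuous_sSup (by fun_prop)

theorem exists_quadForm_eq_quadFormSup (M : Matrix n n ℝ) :
    ∃ δ : EuclideanSpace ℝ n, ‖δ‖ ≤ 1 ∧ δ ⬝ᵥ M *ᵥ δ = quadFormSup M := by
  obtain ⟨δ, hδ, hsup, -⟩ := isCompact_unitBall.exists_sSup_image_eq_and_ge ⟨0, by simp⟩
    (continuous_quadForm M).continuousOn
  exact ⟨δ, hδ, hsup.symm⟩

theorem quadForm_le_quadFormSup (M : Matrix n n ℝ) {δ : EuclideanSpace ℝ n} (hδ : ‖δ‖ ≤ 1) :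
    δ ⬝ᵥ M *ᵥ δ ≤ quadFormSup M :=
  le_csSup ((isCompact_unitBall.image (continuous_quadForm M)).bddAbove)
    ⟨δ, hδ, rfl⟩

theorem quadFormSup_nonneg (M : Matrix n n ℝ) : 0 ≤ quadFormSup M := by
  simpa using quadForm_le_quadFormSup M (δ := 0) (by simp)

theorem quadForm_smul (M : Matrix n n ℝ) (c : ℝ) (x : n → ℝ) :
    (c • x) ⬝ᵥ M *ᵥ (c • x) = c ^ 2 * (x ⬝ᵥ M *ᵥ x) := by
  rw [mulVec_smul, smul_dotProduct, dotProduct_smul, smul_eq_mul, smul_eq_mul]; ring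

theorem quadForm_le_quadFormSup_mul_norm_sq (M : Matrix n n ℝ) (x : EuclideanSpace ℝ n) :
    x ⬝ᵥ M *ᵥ x ≤ quadFormSup M * ‖x‖ ^ 2 := by
  rcases eq_or_ne x 0 with rfl | hx
  · simp
  have hnorm : 0 < ‖x‖ := norm_pos_iff.2 hx
  have h := quadForm_le_quadFormSup M (δ := ‖x‖⁻¹ • x)
    (by rw [norm_smul, norm_inv, norm_norm, inv_mul_cancel₀ hnorm.ne'])
  rw [WithLp.ofLp_smul, quadForm_smul, inv_pow] at h
  rwa [inv_mul_le_iff₀ (by positivity), mul_comm] at h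

theorem dotProduct_self_eq_norm_sq (x : EuclideanSpace ℝ n) : x ⬝ᵥ x = ‖x‖ ^ 2 := by
  rw [← real_inner_self_eq_norm_sq, EuclideanSpace.inner_eq_star_dotProduct, star_trivial]

theorem quadForm_smul_one_sub [DecidableEq n] (M : Matrix n n ℝ) (c : ℝ)
    (x : EuclideanSpace ℝ n) :
    x ⬝ᵥ (c • (1 : Matrix n n ℝ) - M) *ᵥ x = c * ‖x‖ ^ 2 - x ⬝ᵥ M *ᵥ x := by
  rw [sub_mulVec, dotProduct_sub, smul_mulVec, one_mulVec, dotProduct_smul, smul_eq_mul,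
    dotProduct_self_eq_norm_sq]

theorem mulVec_eq_quadFormSup_smul {M : Matrix n n ℝ} (hM : M.IsHermitian)
    {v : EuclideanSpace ℝ n} (hv : ‖v‖ ≤ 1) (hvM : v ⬝ᵥ M *ᵥ v = quadFormSup M) :
    M *ᵥ v = quadFormSup M • v := by
  classical
  set c := quadFormSup M
  have hA : (c • (1 : Matrix n n ℝ) - M).PosSemidef := by
    refine .of_dotProduct_mulVec_nonneg ((isHermitian_one.smul (IsSelfAdjoint.all c)).sub hM)
      fun x => ?_
    rw [star_trivial, ← WithLp.ofLp_toLp 2 x, quadForm_smul_one_sub, sub_nonneg]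
    exact quadForm_le_quadFormSup_mul_norm_sq M _
  have hvA : v ⬝ᵥ (c • (1 : Matrix n n ℝ) - M) *ᵥ v = 0 := by
    refine le_antisymm ?_ (by simpa using hA.dotProduct_mulVec_nonneg v)
    rw [quadForm_smul_one_sub, hvM]
    nlinarith [quadFormSup_nonneg M, pow_le_one₀ (n := 2) (norm_nonneg v) hv]
  have hAv := (hA.dotProduct_mulVec_zero_iff v.ofLp).1 (by rwa [star_trivial])
  rw [sub_mulVec, smul_mulVec, one_mulVec, sub_eq_zero] at hAv
  exact hAv.symm

theorem quadForm_eq_of_finrank_eigenspace_eq_one [DecidableEq n] {M : Matrix n n ℝ}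
    (hM : M.IsHermitian)
    (hsimple : Module.finrank ℝ (Module.End.eigenspace (toLin' M) (quadFormSup M)) = 1)
    (hpos : 0 < quadFormSup M) {u v : EuclideanSpace ℝ n}
    (hu : ‖u‖ ≤ 1) (huM : u ⬝ᵥ M *ᵥ u = quadFormSup M)
    (hv : ‖v‖ ≤ 1) (hvM : v ⬝ᵥ M *ᵥ v = quadFormSup M) (N : Matrix n n ℝ) :
    u ⬝ᵥ N *ᵥ u = v ⬝ᵥ N *ᵥ v := by
  have hmem {w : EuclideanSpace ℝ n} (hw : ‖w‖ ≤ 1) (hwM : w ⬝ᵥ M *ᵥ w = quadFormSup M) :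
      w.ofLp ∈ Module.End.eigenspace (toLin' M) (quadFormSup M) := by
    rw [Module.End.mem_eigenspace_iff, toLin'_apply]
    exact mulVec_eq_quadFormSup_smul hM hw hwM
  have hu0 : (⟨u.ofLp, hmem hu huM⟩ : Module.End.eigenspace (toLin' M) (quadFormSup M)) ≠ 0 := by
    intro h
    have hu0 : u.ofLp = 0 := congrArg Subtype.val h
    rw [hu0, zero_dotProduct] at huM
    exact hpos.ne huM
  obtain ⟨c, hc⟩ := exists_smul_eq_of_finrank_eq_one hsimple hu0 ⟨v.ofLp, hmem hv hvM⟩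
  have hvu : v.ofLp = c • u.ofLp := (congrArg Subtype.val hc).symm
  have hc2 : c ^ 2 = 1 := by
    rw [hvu, quadForm_smul, huM] at hvM
    exact (mul_eq_right₀ hpos.ne').1 hvM
  rw [hvu, quadForm_smul, hc2, one_mul]

theorem exists_quadForm_eq_quadFormSup_le_of_isMinOn {𝓜 : Set (Matrix n n ℝ)}
    (hconv : Convex ℝ 𝓜) {Mstar M : Matrix n n ℝ} (hMstar : Mstar ∈ 𝓜)
    (hmin : IsMinOn quadFormSup 𝓜 Mstar) (hM : M ∈ 𝓜) :
    ∃ δ : EuclideanSpace ℝ n, ‖δ‖ ≤ 1 ∧ δ ⬝ᵥ Mstar *ᵥ δ = quadFormSup Mstar ∧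
      quadFormSup Mstar ≤ δ ⬝ᵥ M *ᵥ δ := by
  refine isCompact_unitBall.exists_eq_and_le_of_forall_exists_le_convexComb
    (continuous_quadForm Mstar) (continuous_quadForm M)
    (fun δ hδ => quadForm_le_quadFormSup Mstar hδ) fun t ht => ?_
  obtain ⟨δ, hδ, hδM⟩ := exists_quadForm_eq_quadFormSup ((1 - t) • Mstar + t • M)
  refine ⟨δ, hδ, ?_⟩
  calc quadFormSup Mstar ≤ quadFormSup ((1 - t) • Mstar + t • M) :=
        hmin (hconv hMstar hM (by linarith [ht.2]) ht.1.le (by ring))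
    _ = (1 - t) * (δ ⬝ᵥ Mstar *ᵥ δ) + t * (δ ⬝ᵥ M *ᵥ δ) := by
        rw [← hδM, add_mulVec, smul_mulVec, smul_mulVec, dotProduct_add, dotProduct_smul,
          dotProduct_smul, smul_eq_mul, smul_eq_mul]

end QuadFormSup

/-- **Theorem 2, part 1 (saddle-point form).** For a nonempty convex compact set `𝓜` of
real symmetric PSD matrices, if every minimizer of `V(M) = sup_{‖δ‖ ≤ 1} δᵀMδ` over `𝓜`
has a simple largest eigenvalue, then the approximate universal adversarial direction game
has a Nash equilibrium with a pure adversary strategy `δ*`. -/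
theorem uad_game_pure_nash_of_simple_top_eigenvalue
    {d : ℕ} (𝓜 : Set (Matrix (Fin d) (Fin d) ℝ))
    (hne : 𝓜.Nonempty) (hconv : Convex ℝ 𝓜) (hcpt : IsCompact 𝓜)
    (hpsd : ∀ M ∈ 𝓜, M.PosSemidef)
    (V : Matrix (Fin d) (Fin d) ℝ → ℝ)
    (hV : ∀ M, V M =
      sSup ((fun δ : EuclideanSpace ℝ (Fin d) => δ ⬝ᵥ M.mulVec δ) ''
        {δ : EuclideanSpace ℝ (Fin d) | ‖δ‖ ≤ 1}))
    (hsimple : ∀ Mstar ∈ 𝓜, (∀ M ∈ 𝓜, V Mstar ≤ V M) →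
      Module.finrank ℝ (Module.End.eigenspace (Matrix.toLin' Mstar) (V Mstar)) = 1) :
    ∃ Mstar ∈ 𝓜, ∃ δstar : EuclideanSpace ℝ (Fin d), ‖δstar‖ ≤ 1 ∧
      (∀ δ : EuclideanSpace ℝ (Fin d), ‖δ‖ ≤ 1 →
        δ ⬝ᵥ Mstar.mulVec δ ≤ δstar ⬝ᵥ Mstar.mulVec δstar) ∧
      (∀ M ∈ 𝓜, δstar ⬝ᵥ Mstar.mulVec δstar ≤ δstar ⬝ᵥ M.mulVec δstar) := by
  obtain rfl : V = quadFormSup := funext hV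
  obtain ⟨Mstar, hMstar, hmin⟩ := hcpt.exists_isMinOn hne continuous_quadFormSup.continuousOn
  obtain ⟨δstar, hδstar, hδstarQ⟩ := exists_quadForm_eq_quadFormSup Mstar
  refine ⟨Mstar, hMstar, δstar, hδstar,
    fun δ hδ => hδstarQ ▸ quadForm_le_quadFormSup Mstar hδ, fun M hM => ?_⟩
  obtain ⟨δ, hδ, hδMstar, hδM⟩ :=
    exists_quadForm_eq_quadFormSup_le_of_isMinOn hconv hMstar hmin hM
  rw [hδstarQ]
  rcases (quadFormSup_nonneg Mstar).eq_or_lt with hzero | hpos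
  · simpa [← hzero] using (hpsd M hM).dotProduct_mulVec_nonneg δstar
  · rwa [quadForm_eq_of_finrank_eigenspace_eq_one (hpsd Mstar hMstar).1
      (hsimple Mstar hMstar hmin) hpos hδstar hδstarQ hδ hδMstar M]
end

section
/- Let 𝓜 be a nonempty, convex, compact set of real symmetric positive semidefinite d×d matrices, let r ≥ 1, define V(M) = sup_{‖δ‖ ≤ 1} δᵀ M δ, and assume that every minimizer M* of V over 𝓜 has largest eigenvalue of multiplicity at most r, i.e. the eigenspace { v : M* v = V(M*) v } has dimension at most r. Then there exist M* ∈ 𝓜 and a real PSD matrix Δ* with trace(Δ*) ≤ 1 and rank(Δ*) ≤ r such that (a) trace(M*·Δ) ≤ trace(M*·Δ*) for every PSD Δ with trace(Δ) ≤ 1 and rank(Δ) ≤ r, and (b) trace(M*·Δ*) ≤ trace(M·Δ*) for every M ∈ 𝓜. In particular, the adversary has an equilibrium strategy supported on an r-dimensional subspace of ℝ^d (the column space of Δ*). (Theorem 2, part 2, rank-constrained saddle-point form.) -/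
/-!
Let `c = V M₀` be the minimum of `V` over `𝓜`. The open convex sublevel set `{N | V N < c}`
misses `𝓜`, so Hahn–Banach separates the two by a functional `N ↦ tr (N Δ)`. The sublevel set
contains `-P` for every PSD `P`, which forces `Δ` to be PSD; normalised to trace one it satisfies
`c ≤ tr (M Δ)` on `𝓜`, while `tr (M₀ Δ') ≤ V M₀ = c` for every PSD `Δ'` of trace at most one.
Hence `tr ((c • 1 - M₀) Δ) = 0` with both factors PSD, so `M₀ Δ = c Δ`: the range of `Δ` lies in
the top eigenspace of `M₀`, of dimension at most `r`.
-/

open Matrix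

theorem EuclideanSpace.dotProduct_ofLp_self {n : Type*} [Fintype n] (y : EuclideanSpace ℝ n) :
    y.ofLp ⬝ᵥ y.ofLp = ‖y‖ ^ 2 := by
  rw [← real_inner_self_eq_norm_sq, EuclideanSpace.inner_eq_star_dotProduct, star_trivial]

theorem isCompact_setOf_norm_le (E : Type*) [SeminormedAddCommGroup E] [ProperSpace E] (r : ℝ) :
    IsCompact {x : E | ‖x‖ ≤ r} := by
  simpa only [Metric.closedBall, dist_zero_right] using isCompact_closedBall (0 : E) r

namespace Matrix

variable {n : Type*} [Fintype n]

section PosSemidef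

variable {𝕜 : Type*} [RCLike 𝕜] {P Q : Matrix n n 𝕜}

open scoped MatrixOrder ComplexOrder

theorem trace_star_mul_self_mul_star_mul_self (B C : Matrix n n 𝕜) :
    (star B * B * (star C * C)).trace = ((B * Cᴴ)ᴴ * (B * Cᴴ)).trace := by
  simp only [star_eq_conjTranspose, conjTranspose_mul, conjTranspose_conjTranspose,
    Matrix.mul_assoc]
  rw [trace_mul_comm C]
  simp only [Matrix.mul_assoc]

theorem PosSemidef.trace_mul_nonneg (hP : P.PosSemidef) (hQ : Q.PosSemidef) :
    0 ≤ (P * Q).trace := by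
  classical
  obtain ⟨B, rfl⟩ := CStarAlgebra.nonneg_iff_eq_star_mul_self.mp hP.nonneg
  obtain ⟨C, rfl⟩ := CStarAlgebra.nonneg_iff_eq_star_mul_self.mp hQ.nonneg
  rw [trace_star_mul_self_mul_star_mul_self]
  exact (posSemidef_conjTranspose_mul_self _).trace_nonneg

theorem PosSemidef.trace_mul_eq_zero_iff (hP : P.PosSemidef) (hQ : Q.PosSemidef) :
    (P * Q).trace = 0 ↔ P * Q = 0 := by
  classical
  refine ⟨fun h ↦ ?_, fun h ↦ by rw [h, trace_zero]⟩
  obtain ⟨B, rfl⟩ := CStarAlgebra.nonneg_iff_eq_star_mul_self.mp hP.nonneg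
  obtain ⟨C, rfl⟩ := CStarAlgebra.nonneg_iff_eq_star_mul_self.mp hQ.nonneg
  rw [trace_star_mul_self_mul_star_mul_self, trace_conjTranspose_mul_self_eq_zero_iff] at h
  rw [star_eq_conjTranspose, star_eq_conjTranspose, Matrix.mul_assoc, ← Matrix.mul_assoc B, h]
  simp

theorem posSemidef_of_forall_trace_mul_nonneg {Δ : Matrix n n 𝕜}
    (hΔ : Δ.IsHermitian) (h : ∀ P : Matrix n n 𝕜, P.PosSemidef → 0 ≤ (P * Δ).trace) :
    Δ.PosSemidef := by
  refine .of_dotProduct_mulVec_nonneg hΔ fun x ↦ ?_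
  have := h _ (posSemidef_vecMulVec_self_star x)
  rwa [vecMulVec_mul, trace_vecMulVec, dotProduct_comm, ← dotProduct_mulVec] at this

end PosSemidef

theorem exists_trace_mul_eq {R : Type*} [CommSemiring R] [DecidableEq n]
    (f : Matrix n n R →ₗ[R] R) : ∃ Δ : Matrix n n R, ∀ N, f N = (N * Δ).trace := by
  refine ⟨of fun j i ↦ f (single i j 1), fun N ↦ ?_⟩
  induction N using Matrix.induction_on' with
  | h_zero => simp
  | h_add A B hA hB => rw [map_add, hA, hB, Matrix.add_mul, trace_add]
  | h_std_basis i j a =>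
    rw [← mul_one a, ← smul_eq_mul, ← smul_single, map_smul, smul_mul, trace_smul,
      trace_single_mul]
    simp

theorem exists_isHermitian_trace_mul_eq (f : Matrix n n ℝ →ₗ[ℝ] ℝ) :
    ∃ Δ : Matrix n n ℝ, Δ.IsHermitian ∧ ∀ N, N.IsHermitian → f N = (N * Δ).trace := by
  classical
  obtain ⟨Δ, hΔ⟩ := exists_trace_mul_eq f
  refine ⟨(2 : ℝ)⁻¹ • (Δ + Δᴴ), ?_, fun N hN ↦ ?_⟩
  · simp [IsHermitian, add_comm]
  · have : (N * Δᴴ).trace = (N * Δ).trace := by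
      rw [← conjTranspose_conjTranspose (N * Δᴴ), trace_conjTranspose, conjTranspose_mul,
        conjTranspose_conjTranspose, hN.eq, trace_mul_comm, star_trivial]
    rw [Matrix.mul_smul, trace_smul, Matrix.mul_add, trace_add, this, hΔ, smul_eq_mul]
    ring

theorem exists_isHermitian_trace_mul_separating {U 𝓜 : Set (Matrix n n ℝ)} (hU : Convex ℝ U)
    (hUo : IsOpen U) (h𝓜 : Convex ℝ 𝓜) (herm : ∀ M ∈ 𝓜, M.IsHermitian) (hdisj : Disjoint U 𝓜) :
    ∃ (Δ : Matrix n n ℝ) (u : ℝ), Δ.IsHermitian ∧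
      (∀ N ∈ U, N.IsHermitian → (N * Δ).trace < u) ∧ ∀ M ∈ 𝓜, u ≤ (M * Δ).trace := by
  obtain ⟨f, u, hfU, hf𝓜⟩ := geometric_hahn_banach_open hU hUo h𝓜 hdisj
  obtain ⟨Δ, hΔ, hfΔ⟩ := exists_isHermitian_trace_mul_eq f.toLinearMap
  exact ⟨Δ, u, hΔ, fun N hN hNh ↦ hfΔ N hNh ▸ hfU N hN, fun M hM ↦ hfΔ M (herm M hM) ▸ hf𝓜 M hM⟩

/-- For symmetric `N` this is `max (λ_max N) 0`, the `0` coming from `δ = 0`. -/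
noncomputable def unitBallQuadSup (N : Matrix n n ℝ) : ℝ :=
  sSup ((fun δ : EuclideanSpace ℝ n => δ ⬝ᵥ N.mulVec δ) '' {δ | ‖δ‖ ≤ 1})

section unitBallQuadSup

variable {N : Matrix n n ℝ}

theorem continuous_unitBallQuadSup : Continuous (unitBallQuadSup (n := n)) :=
  (isCompact_setOf_norm_le (EuclideanSpace ℝ n) 1).continuous_sSup (by fun_prop)

theorem bddAbove_quad_image_unitBall (N : Matrix n n ℝ) :
    BddAbove ((fun δ : EuclideanSpace ℝ n => δ ⬝ᵥ N *ᵥ δ) '' {δ | ‖δ‖ ≤ 1}) :=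
  (isCompact_setOf_norm_le (EuclideanSpace ℝ n) 1).bddAbove_image (by fun_prop)

theorem dotProduct_mulVec_le_unitBallQuadSup {δ : EuclideanSpace ℝ n} (hδ : ‖δ‖ ≤ 1) :
    δ ⬝ᵥ N *ᵥ δ ≤ unitBallQuadSup N :=
  le_csSup (bddAbove_quad_image_unitBall N) ⟨δ, hδ, rfl⟩

theorem unitBallQuadSup_le {b : ℝ} (h : ∀ δ : EuclideanSpace ℝ n, ‖δ‖ ≤ 1 → δ ⬝ᵥ N *ᵥ δ ≤ b) :
    unitBallQuadSup N ≤ b :=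
  csSup_le ⟨_, 0, by simp, rfl⟩ (Set.forall_mem_image.2 h)

theorem unitBallQuadSup_nonneg (N : Matrix n n ℝ) : 0 ≤ unitBallQuadSup N := by
  simpa using dotProduct_mulVec_le_unitBallQuadSup (N := N) (δ := 0) (by simp)

theorem unitBallQuadSup_zero : unitBallQuadSup (0 : Matrix n n ℝ) = 0 :=
  le_antisymm (unitBallQuadSup_le fun δ _ ↦ by simp) (unitBallQuadSup_nonneg 0)

theorem convexOn_unitBallQuadSup : ConvexOn ℝ Set.univ (unitBallQuadSup (n := n)) := by
  refine ⟨convex_univ, fun A _ B _ a b ha hb _ ↦ unitBallQuadSup_le fun δ hδ ↦ ?_⟩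
  simp only [add_mulVec, smul_mulVec, dotProduct_add, dotProduct_smul, smul_eq_mul]
  gcongr <;> exact dotProduct_mulVec_le_unitBallQuadSup hδ

theorem dotProduct_mulVec_le_unitBallQuadSup_mul (N : Matrix n n ℝ) (x : n → ℝ) :
    x ⬝ᵥ N *ᵥ x ≤ unitBallQuadSup N * (x ⬝ᵥ x) := by
  rcases eq_or_ne x 0 with rfl | hx
  · simp
  set y := WithLp.toLp 2 x
  have hy : 0 < ‖y‖ := norm_pos_iff.2 (by simpa [y] using hx)
  have hxx : x ⬝ᵥ x = ‖y‖ ^ 2 := EuclideanSpace.dotProduct_ofLp_self y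
  have hδ := dotProduct_mulVec_le_unitBallQuadSup (N := N) (δ := ‖y‖⁻¹ • y)
    (by rw [norm_smul, norm_inv, norm_norm, inv_mul_cancel₀ hy.ne'])
  simp only [WithLp.ofLp_smul, mulVec_smul, dotProduct_smul, smul_dotProduct, smul_eq_mul,
    y] at hδ
  calc x ⬝ᵥ N *ᵥ x = ‖y‖ ^ 2 * (‖y‖⁻¹ * (‖y‖⁻¹ * (x ⬝ᵥ N *ᵥ x))) := by field_simp
    _ ≤ ‖y‖ ^ 2 * unitBallQuadSup N := by gcongr
    _ = unitBallQuadSup N * (x ⬝ᵥ x) := by rw [hxx, mul_comm]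

theorem unitBallQuadSup_mono {A B : Matrix n n ℝ} (h : (B - A).PosSemidef) :
    unitBallQuadSup A ≤ unitBallQuadSup B := by
  refine unitBallQuadSup_le fun δ hδ ↦ ?_
  have := h.dotProduct_mulVec_nonneg δ.ofLp
  rw [star_trivial, sub_mulVec, dotProduct_sub, sub_nonneg] at this
  exact this.trans (dotProduct_mulVec_le_unitBallQuadSup hδ)

variable [DecidableEq n]

theorem unitBallQuadSup_smul_one_le {a : ℝ} (ha : 0 ≤ a) :
    unitBallQuadSup (a • 1 : Matrix n n ℝ) ≤ a := by
  refine unitBallQuadSup_le fun δ hδ ↦ ?_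
  have : δ.ofLp ⬝ᵥ δ.ofLp ≤ 1 := by
    rw [EuclideanSpace.dotProduct_ofLp_self]
    exact pow_le_one₀ (norm_nonneg δ) hδ
  rw [smul_mulVec, one_mulVec, dotProduct_smul, smul_eq_mul]
  exact mul_le_of_le_one_right ha this

theorem posSemidef_unitBallQuadSup_smul_one_sub (hN : N.IsHermitian) :
    (unitBallQuadSup N • 1 - N).PosSemidef := by
  refine .of_dotProduct_mulVec_nonneg ?_ fun x ↦ ?_
  · simpa [IsHermitian] using hN.eq
  · rw [star_trivial, sub_mulVec, smul_mulVec, one_mulVec, dotProduct_sub, dotProduct_smul,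
      smul_eq_mul, sub_nonneg]
    exact dotProduct_mulVec_le_unitBallQuadSup_mul N x

theorem trace_mul_le_unitBallQuadSup_mul_trace {Δ : Matrix n n ℝ} (hN : N.IsHermitian)
    (hΔ : Δ.PosSemidef) : (N * Δ).trace ≤ unitBallQuadSup N * Δ.trace := by
  have := (posSemidef_unitBallQuadSup_smul_one_sub hN).trace_mul_nonneg hΔ
  rwa [sub_mul, smul_mul, one_mul, trace_sub, trace_smul, smul_eq_mul, sub_nonneg] at this

theorem mul_eq_unitBallQuadSup_smul_of_trace_mul_eq {Δ : Matrix n n ℝ} (hN : N.IsHermitian)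
    (hΔ : Δ.PosSemidef) (hΔtr : Δ.trace ≤ 1) (h : (N * Δ).trace = unitBallQuadSup N) :
    N * Δ = unitBallQuadSup N • Δ := by
  have hgap := posSemidef_unitBallQuadSup_smul_one_sub hN
  have hzero : ((unitBallQuadSup N • 1 - N) * Δ).trace = 0 := by
    refine le_antisymm ?_ (hgap.trace_mul_nonneg hΔ)
    rw [sub_mul, trace_sub, smul_mul, one_mul, trace_smul, h, smul_eq_mul, sub_nonpos]
    exact mul_le_of_le_one_right (unitBallQuadSup_nonneg N) hΔtr
  rw [hgap.trace_mul_eq_zero_iff hΔ, sub_mul, smul_mul, one_mul, sub_eq_zero] at hzero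
  exact hzero.symm

end unitBallQuadSup

theorem rank_le_finrank_eigenspace_of_mul_eq_smul {K : Type*} [Field K] [DecidableEq n]
    {M Δ : Matrix n n K} {c : K} (h : M * Δ = c • Δ) :
    Δ.rank ≤ Module.finrank K (Module.End.eigenspace (toLin' M) c) := by
  refine Submodule.finrank_mono ?_
  rintro _ ⟨x, rfl⟩
  rw [Module.End.mem_eigenspace_iff, toLin'_apply, mulVecLin_apply, mulVec_mulVec, h,
    smul_mulVec]

theorem exists_posSemidef_le_trace_mul_of_le_unitBallQuadSup {𝓜 : Set (Matrix n n ℝ)}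
    (hne : 𝓜.Nonempty) (hconv : Convex ℝ 𝓜) (herm : ∀ M ∈ 𝓜, M.IsHermitian) {c : ℝ}
    (hc : ∀ M ∈ 𝓜, c ≤ unitBallQuadSup M) :
    ∃ Δ : Matrix n n ℝ, Δ.PosSemidef ∧ Δ.trace ≤ 1 ∧ ∀ M ∈ 𝓜, c ≤ (M * Δ).trace := by
  rcases le_or_gt c 0 with hc0 | hc0
  · exact ⟨0, .zero, by simp, fun M _ ↦ by simpa using hc0⟩
  obtain ⟨Δ, u, hΔherm, hU, h𝓜⟩ := exists_isHermitian_trace_mul_separating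
    (by simpa using convexOn_unitBallQuadSup.convex_lt c)
    (isOpen_lt continuous_unitBallQuadSup continuous_const) hconv herm
    (Set.disjoint_left.2 fun N hN hN𝓜 ↦ (hc N hN𝓜).not_gt hN)
  classical
  have hcone : ∀ P : Matrix n n ℝ, P.PosSemidef → unitBallQuadSup (-P) < c := fun P hP ↦
    (unitBallQuadSup_mono (A := -P) (B := 0) (by simpa using hP)).trans_lt
      (by rwa [unitBallQuadSup_zero])
  have hu : 0 < u := by simpa using hU 0 (by simpa using hcone 0 .zero) isHermitian_zero
  have hΔ : Δ.PosSemidef := posSemidef_of_forall_trace_mul_nonneg hΔherm fun P hP ↦ by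
    by_contra! hneg
    -- `t = u / -tr (P Δ)` makes `tr (-(t • P) Δ) = u`
    have ht : 0 ≤ u / -(P * Δ).trace := by have := neg_pos.2 hneg; positivity
    have := hU _ (hcone _ (hP.smul ht)) (hP.smul ht).isHermitian.neg
    rw [neg_mul, trace_neg, smul_mul, trace_smul, smul_eq_mul, div_mul_eq_mul_div,
      mul_div_assoc, div_neg_self hneg.ne] at this
    linarith
  obtain ⟨M₀, hM₀⟩ := hne
  have htr : 0 < Δ.trace := pos_of_mul_pos_right
    (hu.trans_le ((h𝓜 M₀ hM₀).trans (trace_mul_le_unitBallQuadSup_mul_trace (herm M₀ hM₀) hΔ)))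
    (unitBallQuadSup_nonneg M₀)
  have hcu : c * Δ.trace ≤ u := by
    by_contra! h
    -- `a = u / tr Δ < c` makes `tr ((a • 1) Δ) = u`
    have ha : 0 ≤ u / Δ.trace := by positivity
    have := hU _ ((unitBallQuadSup_smul_one_le ha).trans_lt ((div_lt_iff₀ htr).2 h))
      (PosSemidef.one.smul ha).isHermitian
    rw [smul_mul, one_mul, trace_smul, smul_eq_mul, div_mul_cancel₀ _ htr.ne'] at this
    exact this.false
  refine ⟨(Δ.trace)⁻¹ • Δ, hΔ.smul (by positivity), by simp [trace_smul, htr.ne'],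
    fun M hM ↦ ?_⟩
  rw [Matrix.mul_smul, trace_smul, smul_eq_mul, le_inv_mul_iff₀ htr, mul_comm]
  exact hcu.trans (h𝓜 M hM)

end Matrix

theorem uad_game_rank_r_nash_of_top_eigenvalue_multiplicity_general
    {d : ℕ} (𝓜 : Set (Matrix (Fin d) (Fin d) ℝ))
    (hne : 𝓜.Nonempty) (hconv : Convex ℝ 𝓜) (hcpt : IsCompact 𝓜)
    (hpsd : ∀ M ∈ 𝓜, M.PosSemidef)
    (r : ℕ)
    (V : Matrix (Fin d) (Fin d) ℝ → ℝ)
    (hV : ∀ M, V M =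
      sSup ((fun δ : EuclideanSpace ℝ (Fin d) => δ ⬝ᵥ M.mulVec δ) ''
        {δ : EuclideanSpace ℝ (Fin d) | ‖δ‖ ≤ 1}))
    (hmult : ∀ Mstar ∈ 𝓜, (∀ M ∈ 𝓜, V Mstar ≤ V M) →
      Module.finrank ℝ (Module.End.eigenspace (Matrix.toLin' Mstar) (V Mstar)) ≤ r) :
    ∃ Mstar ∈ 𝓜, ∃ Δstar : Matrix (Fin d) (Fin d) ℝ,
      Δstar.PosSemidef ∧ Δstar.trace ≤ 1 ∧ Δstar.rank ≤ r ∧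
      (∀ Δ : Matrix (Fin d) (Fin d) ℝ, Δ.PosSemidef → Δ.trace ≤ 1 → Δ.rank ≤ r →
        (Mstar * Δ).trace ≤ (Mstar * Δstar).trace) ∧
      (∀ M ∈ 𝓜, (Mstar * Δstar).trace ≤ (M * Δstar).trace) := by
  obtain rfl : V = unitBallQuadSup := funext hV
  have herm M (hM : M ∈ 𝓜) : M.IsHermitian := (hpsd M hM).isHermitian
  obtain ⟨M₀, hM₀, hmin⟩ := hcpt.exists_isMinOn hne continuous_unitBallQuadSup.continuousOn
  obtain ⟨Δ₀, hΔ₀, hΔ₀tr, hΔ₀𝓜⟩ :=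
    exists_posSemidef_le_trace_mul_of_le_unitBallQuadSup hne hconv herm fun M hM ↦ hmin hM
  have hbest (Δ : Matrix (Fin d) (Fin d) ℝ) (hΔ : Δ.PosSemidef) (hΔtr : Δ.trace ≤ 1) :
      (M₀ * Δ).trace ≤ unitBallQuadSup M₀ :=
    (trace_mul_le_unitBallQuadSup_mul_trace (herm M₀ hM₀) hΔ).trans
      (mul_le_of_le_one_right (unitBallQuadSup_nonneg M₀) hΔtr)
  have hvalue : (M₀ * Δ₀).trace = unitBallQuadSup M₀ :=
    le_antisymm (hbest Δ₀ hΔ₀ hΔ₀tr) (hΔ₀𝓜 M₀ hM₀)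
  have hrank : Δ₀.rank ≤ r :=
    (rank_le_finrank_eigenspace_of_mul_eq_smul
      (mul_eq_unitBallQuadSup_smul_of_trace_mul_eq (herm M₀ hM₀) hΔ₀ hΔ₀tr hvalue)).trans
      (hmult M₀ hM₀ fun M hM ↦ hmin hM)
  refine ⟨M₀, hM₀, Δ₀, hΔ₀, hΔ₀tr, hrank, fun Δ hΔ hΔtr _ ↦ ?_, fun M hM ↦ ?_⟩
  · exact hvalue ▸ hbest Δ hΔ hΔtr
  · exact hvalue ▸ hΔ₀𝓜 M hM

/-- **Theorem 2, part 2 (rank-constrained saddle-point form).** For a nonempty convex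
compact set `𝓜` of real symmetric PSD matrices, if every minimizer of
`V(M) = sup_{‖δ‖ ≤ 1} δᵀMδ` over `𝓜` has largest eigenvalue of multiplicity at most `r`,
then the rank-`r`-constrained universal adversarial direction game with payoff
`trace(M·Δ)` has a saddle point `(Δ*, M*)` with `Δ*` PSD, `trace(Δ*) ≤ 1`, `rank(Δ*) ≤ r`. -/
theorem uad_game_rank_r_nash_of_top_eigenvalue_multiplicity
    {d : ℕ} (𝓜 : Set (Matrix (Fin d) (Fin d) ℝ))
    (hne : 𝓜.Nonempty) (hconv : Convex ℝ 𝓜) (hcpt : IsCompact 𝓜)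
    (hpsd : ∀ M ∈ 𝓜, M.PosSemidef)
    (r : ℕ) (hr : 1 ≤ r)
    (V : Matrix (Fin d) (Fin d) ℝ → ℝ)
    (hV : ∀ M, V M =
      sSup ((fun δ : EuclideanSpace ℝ (Fin d) => δ ⬝ᵥ M.mulVec δ) ''
        {δ : EuclideanSpace ℝ (Fin d) | ‖δ‖ ≤ 1}))
    (hmult : ∀ Mstar ∈ 𝓜, (∀ M ∈ 𝓜, V Mstar ≤ V M) →
      Module.finrank ℝ (Module.End.eigenspace (Matrix.toLin' Mstar) (V Mstar)) ≤ r) :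
    ∃ Mstar ∈ 𝓜, ∃ Δstar : Matrix (Fin d) (Fin d) ℝ,
      Δstar.PosSemidef ∧ Δstar.trace ≤ 1 ∧ Δstar.rank ≤ r ∧
      (∀ Δ : Matrix (Fin d) (Fin d) ℝ, Δ.PosSemidef → Δ.trace ≤ 1 → Δ.rank ≤ r →
        (Mstar * Δ).trace ≤ (Mstar * Δstar).trace) ∧
      (∀ M ∈ 𝓜, (Mstar * Δstar).trace ≤ (M * Δstar).trace) :=
  uad_game_rank_r_nash_of_top_eigenvalue_multiplicity_general 𝓜 hne hconv hcpt hpsd r V hV hmult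
end
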